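/- Let L ≥ 1, v : ZMod L → ℂ, H = Matrix.circulant v, with DFT values λ_k = Σ_{m ∈ ZMod L} v(m) · exp(−2π√−1 · (k.val · m.val)/L), and let s > 0 be real. Set A = Hᴴ * H + s⁻¹ • 1. Then trace(A⁻¹) − s⁻¹ · trace(A⁻¹ * A⁻¹) = Σ_{k ∈ ZMod L} |λ_k|² / (|λ_k|² + s⁻¹)². Equivalently (multiplying by s), (1/L) Σ_k s/(s|λ_k|² + 1) − (1/L) Σ_k s/(s|λ_k|² + 1)² = (1/L) Σ_k s²|λ_k|²/(s|λ_k|² + 1)². (Equation (26) of the paper: the variance σ²_ñ(ℓ) of the MMSE residual noise about its conditional mean.) -/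

import Mathlib

/-!
The unnormalised DFT matrix `F` on `ZMod L` satisfies `F Fᴴ = L • 1` and diagonalises every
circulant matrix, `F * circulant v = diagonal λ * F`. Taking adjoints, `F` also diagonalises
`Hᴴ`, hence `F * A = diagonal g * F` with `g k = |λ k|² + s⁻¹ > 0`. Then `A⁻¹` and `A⁻¹ * A⁻¹` are
conjugate to `diagonal g⁻¹` and `diagonal g⁻²`, so both traces are sums over `k`, and the claim
reduces termwise to `g⁻¹ - s⁻¹ g⁻² = |λ|² / g²`.
-/

open Matrix

/-- The DFT values of the first row of the circulant matrix `circulant v`: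
`λ_k = ∑_m v(m) exp(-2π√-1 · k m / L)`. -/
noncomputable def circDFT (L : ℕ) [NeZero L] (v : ZMod L → ℂ) (k : ZMod L) : ℂ :=
  ∑ m : ZMod L,
    v m * Complex.exp (-(2 * (Real.pi : ℂ) * Complex.I) * ((k.val : ℂ) * (m.val : ℂ)) / (L : ℂ))

open ZMod

namespace Matrix

variable {n : Type*} [Fintype n] [DecidableEq n]

section Field

variable {K : Type*} [Field K] {F A : Matrix n n K} {d : n → K}

theorem inv_eq_of_mul_eq_diagonal_mul (hF : IsUnit F) (hd : ∀ i, d i ≠ 0)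
    (h : F * A = diagonal d * F) : A⁻¹ = F⁻¹ * diagonal d⁻¹ * F := by
  have hdet : IsUnit F.det := (isUnit_iff_isUnit_det F).1 hF
  have hA : A = F⁻¹ * diagonal d * F := by
    rw [Matrix.mul_assoc, ← h, ← Matrix.mul_assoc, nonsing_inv_mul _ hdet, Matrix.one_mul]
  have hdiag : (diagonal d)⁻¹ = diagonal d⁻¹ :=
    inv_eq_right_inv (by simp [diagonal_mul_diagonal, hd])
  rw [hA, mul_inv_rev, mul_inv_rev, hdiag, nonsing_inv_nonsing_inv _ hdet, Matrix.mul_assoc]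

theorem trace_inv_of_mul_eq_diagonal_mul (hF : IsUnit F) (hd : ∀ i, d i ≠ 0)
    (h : F * A = diagonal d * F) : trace A⁻¹ = ∑ i, (d i)⁻¹ := by
  rw [inv_eq_of_mul_eq_diagonal_mul hF hd h, trace_conj' hF, trace_diagonal]
  rfl

theorem trace_inv_mul_inv_of_mul_eq_diagonal_mul (hF : IsUnit F)
    (hd : ∀ i, d i ≠ 0) (h : F * A = diagonal d * F) : trace (A⁻¹ * A⁻¹) = ∑ i, (d i)⁻¹ ^ 2 := by
  have hdet : IsUnit F.det := (isUnit_iff_isUnit_det F).1 hF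
  have hsq : A⁻¹ * A⁻¹ = F⁻¹ * (diagonal d⁻¹ * diagonal d⁻¹) * F := by
    rw [inv_eq_of_mul_eq_diagonal_mul hF hd h]
    simp only [Matrix.mul_assoc, mul_nonsing_inv_cancel_left _ _ hdet]
  rw [hsq, trace_conj' hF, diagonal_mul_diagonal, trace_diagonal]
  simp only [Pi.inv_apply, sq]

end Field

section RCLike

variable {𝕜 : Type*} [RCLike 𝕜] {F H : Matrix n n 𝕜} {d : n → 𝕜}

theorem mul_inv_smul_conjTranspose_eq_one {c : 𝕜} (hc : c ≠ 0) (hF : F * Fᴴ = c • 1) :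
    F * (c⁻¹ • Fᴴ) = 1 := by
  rw [Matrix.mul_smul, hF, smul_smul, inv_mul_cancel₀ hc, one_smul]

theorem mul_conjTranspose_eq_diagonal_star_mul {c : 𝕜} (hc : c ≠ 0) (hF : F * Fᴴ = c • 1)
    (h : F * H = diagonal d * F) : F * Hᴴ = diagonal (star d) * F := by
  have hF' : Fᴴ * F = c • 1 := by
    rw [← inv_smul_eq_iff₀ hc, ← Matrix.smul_mul,
      mul_eq_one_comm.1 (mul_inv_smul_conjTranspose_eq_one hc hF)]
  have hstar : Hᴴ * Fᴴ = Fᴴ * diagonal (star d) := by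
    rw [← conjTranspose_mul, h, conjTranspose_mul, diagonal_conjTranspose]
  apply smul_right_injective _ hc
  calc c • (F * Hᴴ) = F * Hᴴ * (Fᴴ * F) := by rw [hF', Matrix.mul_smul, Matrix.mul_one]
    _ = F * Fᴴ * diagonal (star d) * F := by simp only [Matrix.mul_assoc, ← hstar]
    _ = c • (diagonal (star d) * F) := by rw [hF, Matrix.smul_mul, Matrix.one_mul, Matrix.smul_mul]

theorem mul_gram_add_smul_one_eq_diagonal_mul {c : 𝕜} (hc : c ≠ 0) (hF : F * Fᴴ = c • 1)
    (h : F * H = diagonal d * F) (s : ℝ) :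
    F * (Hᴴ * H + s • 1) = diagonal (fun i => ((‖d i‖ ^ 2 + s : ℝ) : 𝕜)) * F := by
  rw [Matrix.mul_add, ← Matrix.mul_assoc, mul_conjTranspose_eq_diagonal_star_mul hc hF h,
    Matrix.mul_assoc, h, ← Matrix.mul_assoc, diagonal_mul_diagonal, Matrix.mul_smul,
    Matrix.mul_one]
  ext i j
  simp [add_mul, RCLike.conj_mul, RCLike.real_smul_eq_coe_mul]

end RCLike

end Matrix

namespace ZMod

variable {L : ℕ} [NeZero L]

noncomputable def dftMatrix (L : ℕ) [NeZero L] : Matrix (ZMod L) (ZMod L) ℂ :=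
  Matrix.of fun k m => stdAddChar (-(m * k))

theorem dftMatrix_mul_conjTranspose : dftMatrix L * (dftMatrix L)ᴴ = (L : ℂ) • 1 := by
  ext k k'
  have hentry (m : ZMod L) :
      dftMatrix L k m * star (dftMatrix L k' m) = stdAddChar (m * (k' - k)) := by
    rw [dftMatrix, Matrix.of_apply, Matrix.of_apply, RCLike.star_def, ← AddChar.map_neg_eq_conj,
      neg_neg, ← AddChar.map_add_eq_mul]
    congr 1
    ring
  simp only [Matrix.mul_apply, Matrix.conjTranspose_apply, hentry,
    AddChar.sum_mulShift _ (isPrimitive_stdAddChar L)]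
  simp [Matrix.one_apply, sub_eq_zero, eq_comm, card]

theorem dftMatrix_mul_circulant (v : ZMod L → ℂ) :
    dftMatrix L * Matrix.circulant v = Matrix.diagonal (𝓕 v) * dftMatrix L := by
  ext k j
  rw [Matrix.mul_apply, Matrix.diagonal_mul, dft_apply, Finset.sum_mul]
  refine Fintype.sum_equiv (Equiv.subRight j) _ _ fun m => ?_
  simp only [dftMatrix, Matrix.of_apply, Matrix.circulant_apply, Equiv.subRight_apply, smul_eq_mul]
  rw [mul_right_comm, ← AddChar.map_add_eq_mul]
  congr 2
  ring

theorem isUnit_dftMatrix : IsUnit (dftMatrix L) :=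
  (isUnit_iff_isUnit_det _).2 <| isUnit_det_of_right_inverse <|
    mul_inv_smul_conjTranspose_eq_one (NeZero.ne _) dftMatrix_mul_conjTranspose

end ZMod

theorem circDFT_eq_dft {L : ℕ} [NeZero L] (v : ZMod L → ℂ) : circDFT L v = 𝓕 v := by
  ext k
  refine Finset.sum_congr rfl fun m _ => ?_
  have hcast : (-(m * k) : ZMod L) = ((-(m.val * k.val : ℤ) : ℤ) : ZMod L) := by
    push_cast
    simp
  rw [smul_eq_mul, mul_comm, hcast, stdAddChar_coe]
  congr 2
  push_cast
  ring

theorem inv_sub_mul_inv_sq {K : Type*} [Field K] {a c : K} (h : a + c ≠ 0) :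
    (a + c)⁻¹ - c * (a + c)⁻¹ ^ 2 = a / (a + c) ^ 2 := by
  field_simp
  ring

/-- Equation (26) of the paper: for a circulant channel matrix `H` with DFT
values `λ_k` and `A = Hᴴ H + s⁻¹ I` (with SNR `s > 0`), the variance of the
MMSE residual noise about its conditional mean satisfies
`trace A⁻¹ - s⁻¹ · trace (A⁻¹ A⁻¹) = ∑_k |λ_k|² / (|λ_k|² + s⁻¹)²`. -/
theorem mmse_residual_variance (L : ℕ) [NeZero L] (v : ZMod L → ℂ) (s : ℝ) (hs : 0 < s) :
    Matrix.trace (((Matrix.circulant v)ᴴ * Matrix.circulant v +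
          s⁻¹ • (1 : Matrix (ZMod L) (ZMod L) ℂ))⁻¹)
      - (s⁻¹ : ℂ) * Matrix.trace ((((Matrix.circulant v)ᴴ * Matrix.circulant v +
          s⁻¹ • (1 : Matrix (ZMod L) (ZMod L) ℂ))⁻¹) *
          (((Matrix.circulant v)ᴴ * Matrix.circulant v +
          s⁻¹ • (1 : Matrix (ZMod L) (ZMod L) ℂ))⁻¹))
      = ∑ k : ZMod L,
          ((‖circDFT L v k‖ ^ 2 /
            (‖circDFT L v k‖ ^ 2 + s⁻¹) ^ 2 : ℝ) : ℂ) := by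
  have hdiag := mul_gram_add_smul_one_eq_diagonal_mul (NeZero.ne _)
    dftMatrix_mul_conjTranspose (dftMatrix_mul_circulant v) s⁻¹
  have hne (k : ZMod L) : ((‖𝓕 v k‖ ^ 2 + s⁻¹ : ℝ) : ℂ) ≠ 0 :=
    Complex.ofReal_ne_zero.2 (by positivity)
  rw [trace_inv_of_mul_eq_diagonal_mul isUnit_dftMatrix hne hdiag,
    trace_inv_mul_inv_of_mul_eq_diagonal_mul isUnit_dftMatrix hne hdiag, Finset.mul_sum,
    ← Finset.sum_sub_distrib, circDFT_eq_dft]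
  refine Finset.sum_congr rfl fun k _ => ?_
  push_cast at hne ⊢
  exact inv_sub_mul_inv_sq (hne k)
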